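/- Let K be a positive integer, a ∈ ℝ^K with a_k ≥ 0 for all k and ∑_k a_k = 1, and let 0 < λ < 1/K. Then for every ε > 0 there exists δ₀ > 0 such that for every δ ∈ (0, δ₀) and every z_δ ∈ Δ^K that minimizes F_δ over Δ^K, one has ‖z_δ − z₀‖ < ε; that is, every family of minimizers z_δ converges to the normalized soft-threshold z₀ as δ → 0⁺. (Theorem 3.1 of the paper, quoted from Carmichael 2020.) -/

import Mathlib

/-!
Per coordinate, `t ↦ −a log t + λ log (δ + t)` has a minorant: `−(a − λ) log t` when `a ≥ λ`,
and, when `a < λ`, its minimum `(λ − a) log δ + c(a)`, attained at `t = δa/(λ − a)`, with `c(a)`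
independent of `δ`. Compare a minimizer `z_δ` with the test point that puts mass `δa/(λ − a)`
(or `√δ` when `a = λ`) on the coordinates with `a ≤ λ` and distributes the remaining mass
`1 − τ(δ)` proportionally to `z₀`: all `log δ` terms cancel and, with `s = ∑ (a_k − λ)₊`, one is
left with `s · KL(z₀ ‖ z_δ) ≤ R(δ)` for an explicit `R(δ) → 0`. The squared Hellinger distance
`∑ (√z_δ − √z₀)²` is at most the Kullback–Leibler divergence and controls `‖z_δ − z₀‖`.
-/

open Finset

/-- The term `−a_k log z_k` of the penalized objective, valued in `EReal`:
it is `0` when `a_k = 0`, `+∞` when `z_k = 0` and `a_k ≠ 0`, and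
`−a_k log z_k` otherwise. -/
noncomputable def negLogTerm (a z : ℝ) : EReal :=
  if a = 0 then 0 else if z = 0 then ⊤ else ((-(a * Real.log z) : ℝ) : EReal)

/-- The penalized objective `F_δ(z) = −∑_k a_k log z_k + λ ∑_k log(δ + z_k)`,
valued in `EReal`. -/
noncomputable def Fdelta {K : ℕ} (a : Fin K → ℝ) (lam δ : ℝ) (z : Fin K → ℝ) : EReal :=
  (∑ k, negLogTerm (a k) (z k)) + ((lam * ∑ k, Real.log (δ + z k) : ℝ) : EReal)

open Real Filter Topology

lemma sq_sqrt_sub_sqrt_add_sub_le_mul_log {p z : ℝ} (hp : 0 ≤ p) (hz : 0 ≤ z)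
    (hpz : 0 < p → 0 < z) : (√z - √p) ^ 2 + p - z ≤ p * (log p - log z) := by
  rcases hp.eq_or_lt with rfl | hp
  · simp [sq_sqrt hz]
  have hz := hpz hp
  have hlog : log (√z / √p) ≤ √z / √p - 1 := log_le_sub_one_of_pos (by positivity)
  rw [log_div (by positivity) (by positivity), log_sqrt hz.le, log_sqrt hp.le] at hlog
  have hmul : p * (√z / √p) = √p * √z := by
    rw [mul_div_assoc', div_eq_iff (sqrt_pos.mpr hp).ne']
    linear_combination -√z * mul_self_sqrt hp.le
  have hsq : (√z - √p) ^ 2 = z + p - 2 * (√p * √z) := by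
    linear_combination sq_sqrt hz.le + sq_sqrt hp.le
  have := mul_le_mul_of_nonneg_left hlog hp.le
  rw [mul_sub p _ 1, mul_one, hmul] at this
  rw [hsq]
  linarith

lemma sum_sq_sqrt_sub_sqrt_le_sum_mul_log_sub {ι : Type*} [Fintype ι] {p z : ι → ℝ}
    (hp : ∀ i, 0 ≤ p i) (hz : ∀ i, 0 ≤ z i) (hpz : ∀ i, 0 < p i → 0 < z i)
    (hp1 : ∑ i, p i = 1) (hz1 : ∑ i, z i = 1) :
    ∑ i, (√(z i) - √(p i)) ^ 2 ≤ ∑ i, p i * (log (p i) - log (z i)) := by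
  have h := sum_le_sum fun i (_ : i ∈ univ) =>
    sq_sqrt_sub_sqrt_add_sub_le_mul_log (hp i) (hz i) (hpz i)
  rwa [sum_sub_distrib, sum_add_distrib, hp1, hz1, add_sub_cancel_right] at h

lemma abs_sub_le_two_mul_abs_sqrt_sub {x y : ℝ} (hx : x ∈ Set.Icc (0 : ℝ) 1)
    (hy : y ∈ Set.Icc (0 : ℝ) 1) : |x - y| ≤ 2 * |√x - √y| := by
  have hxy : x - y = (√x - √y) * (√x + √y) := by
    linear_combination sq_sqrt hy.1 - sq_sqrt hx.1
  have hsum : √x + √y ≤ 2 := by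
    linarith [sqrt_le_one.mpr hx.2, sqrt_le_one.mpr hy.2]
  rw [hxy, abs_mul, abs_of_nonneg (by positivity : 0 ≤ √x + √y), mul_comm]
  exact mul_le_mul_of_nonneg_right hsum (abs_nonneg _)

noncomputable def penalizedTerm (lam δ a t : ℝ) : ℝ := -(a * log t) + lam * log (δ + t)

noncomputable def penalizedMinorant (lam δ a t : ℝ) : ℝ :=
  if lam ≤ a then -((a - lam) * log t)
  else (lam - a) * log δ + (negMulLog a + negMulLog (lam - a) - negMulLog lam)

lemma penalizedMinorant_sub (lam δ a t t' : ℝ) :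
    penalizedMinorant lam δ a t - penalizedMinorant lam δ a t'
      = max (a - lam) 0 * (log t' - log t) := by
  unfold penalizedMinorant
  split_ifs with h
  · rw [max_eq_left (sub_nonneg.mpr h)]; ring
  · rw [max_eq_right (by linarith)]; ring

lemma mul_log_add_mul_log_add_le_mul_log_add {lam δ a t : ℝ} (hδ : 0 < δ) (ht : 0 < t) (ha : 0 < a)
    (hlam : a < lam) :
    a * log t + (lam - a) * log δ + (negMulLog a + negMulLog (lam - a) - negMulLog lam)
      ≤ lam * log (δ + t) := by
  have hla : 0 < lam - a := sub_pos.mpr hlam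
  have hl : 0 < lam := ha.trans hlam
  have hconc := strictConcaveOn_log_Ioi.concaveOn.2
    (Set.mem_Ioi.mpr (by positivity : 0 < t * lam / a))
    (Set.mem_Ioi.mpr (by positivity : 0 < δ * lam / (lam - a)))
    (by positivity : 0 ≤ a / lam) (by positivity : 0 ≤ (lam - a) / lam)
    (by rw [← add_div, add_sub_cancel, div_self hl.ne'])
  have hmean : a / lam * (t * lam / a) + (lam - a) / lam * (δ * lam / (lam - a)) = δ + t := by
    field_simp; ring
  simp only [smul_eq_mul] at hconc
  rw [hmean, log_div (by positivity) ha.ne', log_mul ht.ne' hl.ne',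
    log_div (by positivity) hla.ne', log_mul hδ.ne' hl.ne'] at hconc
  have h := mul_le_mul_of_nonneg_left hconc hl.le
  simp only [negMulLog]
  field_simp at h
  nlinarith [h]

lemma penalizedMinorant_le_penalizedTerm {lam δ a t : ℝ} (hlam : 0 < lam) (hδ : 0 < δ)
    (ha : 0 ≤ a) (ht : 0 ≤ t) (hat : 0 < a → 0 < t) :
    penalizedMinorant lam δ a t ≤ penalizedTerm lam δ a t := by
  unfold penalizedMinorant penalizedTerm
  split_ifs with h
  · have hlog := log_le_log (hat (hlam.trans_le h)) (lt_add_of_pos_left t hδ).le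
    nlinarith [mul_le_mul_of_nonneg_left hlog hlam.le]
  rcases ha.eq_or_lt with rfl | ha
  · have hlog := log_le_log hδ (le_add_of_nonneg_right ht)
    simp only [negMulLog_zero, zero_mul, neg_zero, zero_add, sub_zero]
    nlinarith [mul_le_mul_of_nonneg_left hlog hlam.le]
  · linarith [mul_log_add_mul_log_add_le_mul_log_add hδ (hat ha) ha (not_le.mp h)]

lemma penalizedTerm_eq_penalizedMinorant_of_lt {lam δ a : ℝ} (hδ : 0 < δ) (ha : 0 ≤ a)
    (hlam : a < lam) :
    penalizedTerm lam δ a (δ * a / (lam - a)) = penalizedMinorant lam δ a (δ * a / (lam - a)) := by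
  have hla : 0 < lam - a := sub_pos.mpr hlam
  have hl : 0 < lam := ha.trans_lt hlam
  have hsum : δ + δ * a / (lam - a) = δ * lam / (lam - a) := by field_simp; ring
  unfold penalizedTerm penalizedMinorant
  rw [if_neg (not_le.mpr hlam), hsum]
  rcases ha.eq_or_lt with rfl | ha
  · simp [hl.ne']
  rw [log_div (by positivity) hla.ne', log_mul hδ.ne' ha.ne', log_div (by positivity) hla.ne',
    log_mul hδ.ne' hl.ne']
  simp only [negMulLog]
  ring

lemma penalizedTerm_le_penalizedMinorant_add_of_le {lam δ a t : ℝ} (hlam : 0 < lam) (hδ : 0 < δ)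
    (ht : 0 < t) (h : lam ≤ a) :
    penalizedTerm lam δ a t ≤ penalizedMinorant lam δ a t + lam * (δ / t) := by
  have hlog : log (δ + t) - log t ≤ δ / t := by
    rw [← log_div (by positivity) ht.ne', add_div, div_self ht.ne']
    linarith [log_le_sub_one_of_pos (by positivity : 0 < δ / t + 1)]
  unfold penalizedTerm penalizedMinorant
  rw [if_pos h]
  nlinarith [mul_le_mul_of_nonneg_left hlog hlam.le]

section TestPoint

variable {ι : Type*} [Fintype ι]

noncomputable def softThreshold (a : ι → ℝ) (lam : ℝ) (k : ι) : ℝ :=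
  max (a k - lam) 0 / ∑ j, max (a j - lam) 0

lemma softThreshold_nonneg (a : ι → ℝ) (lam : ℝ) (k : ι) : 0 ≤ softThreshold a lam k :=
  div_nonneg (le_max_right _ _) (sum_nonneg fun _ _ => le_max_right _ _)

lemma softThreshold_eq_zero {a : ι → ℝ} {lam : ℝ} {k : ι} (h : a k ≤ lam) :
    softThreshold a lam k = 0 := by
  simp [softThreshold, max_eq_right (sub_nonpos.mpr h)]

lemma softThreshold_pos {a : ι → ℝ} {lam : ℝ} {k : ι} (h : lam < a k) :
    0 < softThreshold a lam k := by
  have hk : 0 < max (a k - lam) 0 := lt_max_of_lt_left (sub_pos.mpr h)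
  exact div_pos hk (hk.trans_le (single_le_sum (fun j _ => le_max_right (a j - lam) 0)
    (mem_univ k)))

lemma softThreshold_pos_iff {a : ι → ℝ} {lam : ℝ} {k : ι} :
    0 < softThreshold a lam k ↔ lam < a k :=
  ⟨fun h => not_le.mp fun h' => h.ne' (softThreshold_eq_zero h'), softThreshold_pos⟩

lemma max_sub_eq_mul_softThreshold (a : ι → ℝ) {lam : ℝ} (hs : 0 < ∑ j, max (a j - lam) 0)
    (k : ι) : max (a k - lam) 0 = (∑ j, max (a j - lam) 0) * softThreshold a lam k :=
  (mul_div_cancel₀ _ hs.ne').symm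

lemma softThreshold_mem_stdSimplex (a : ι → ℝ) {lam : ℝ} (hs : 0 < ∑ j, max (a j - lam) 0) :
    softThreshold a lam ∈ stdSimplex ℝ ι :=
  ⟨softThreshold_nonneg a lam, by simp only [softThreshold]; rw [← sum_div, div_self hs.ne']⟩

noncomputable def testMass (lam δ a : ℝ) : ℝ :=
  if a < lam then δ * a / (lam - a) else if a = lam then √δ else 0

lemma testMass_nonneg {lam δ a : ℝ} (hδ : 0 ≤ δ) (ha : 0 ≤ a) : 0 ≤ testMass lam δ a := by
  unfold testMass
  split_ifs with h
  · exact div_nonneg (mul_nonneg hδ ha) (sub_pos.mpr h).le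
  · exact sqrt_nonneg δ
  · exact le_rfl

lemma testMass_pos {lam δ a : ℝ} (hδ : 0 < δ) (ha : 0 < a) (h : a ≤ lam) :
    0 < testMass lam δ a := by
  unfold testMass
  split_ifs with hlt heq
  · exact div_pos (mul_pos hδ ha) (sub_pos.mpr hlt)
  · exact sqrt_pos.mpr hδ
  · exact absurd (h.lt_of_ne heq) hlt

lemma testMass_eq_zero {lam δ a : ℝ} (h : lam < a) : testMass lam δ a = 0 := by
  simp [testMass, h.not_gt, h.ne']

lemma continuous_testMass (lam a : ℝ) : Continuous fun δ => testMass lam δ a := by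
  unfold testMass
  split_ifs
  · fun_prop
  · exact continuous_sqrt
  · exact continuous_const

lemma testMass_zero (lam a : ℝ) : testMass lam 0 a = 0 := by
  simp [testMass]

noncomputable def testMassSum (a : ι → ℝ) (lam δ : ℝ) : ℝ := ∑ j, testMass lam δ (a j)

noncomputable def testPoint (a : ι → ℝ) (lam δ : ℝ) (k : ι) : ℝ :=
  testMass lam δ (a k) + (1 - testMassSum a lam δ) * softThreshold a lam k

/-- `λ δ / w_k` bounds the excess of `penalizedTerm` over its minorant at the test point `w` when
`a_k ≥ λ` (there is none when `a_k < λ`), and `−s log (1 − τ)` is the cost of scaling `z₀` by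
`1 − τ`. -/
noncomputable def testPointRemainder (a : ι → ℝ) (lam δ : ℝ) : ℝ :=
  ∑ k, (if lam ≤ a k then lam * (δ / testPoint a lam δ k) else 0)
    - (∑ j, max (a j - lam) 0) * log (1 - testMassSum a lam δ)

variable {a : ι → ℝ} {lam δ : ℝ}

lemma testPoint_of_lt (k : ι) (h : a k < lam) :
    testPoint a lam δ k = δ * a k / (lam - a k) := by
  simp [testPoint, testMass, h, softThreshold_eq_zero h.le]

lemma testPoint_of_gt (k : ι) (h : lam < a k) :
    testPoint a lam δ k = (1 - testMassSum a lam δ) * softThreshold a lam k := by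
  simp [testPoint, testMass_eq_zero h]

lemma testPoint_mem_stdSimplex (hδ : 0 ≤ δ) (ha : ∀ k, 0 ≤ a k)
    (hs : 0 < ∑ j, max (a j - lam) 0) (hτ : testMassSum a lam δ ≤ 1) :
    testPoint a lam δ ∈ stdSimplex ℝ ι := by
  refine ⟨fun k => add_nonneg (testMass_nonneg hδ (ha k))
    (mul_nonneg (sub_nonneg.mpr hτ) (softThreshold_nonneg a lam k)), ?_⟩
  simp only [testPoint]
  rw [sum_add_distrib, ← mul_sum, (softThreshold_mem_stdSimplex a hs).2]
  simp [testMassSum]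

lemma testPoint_pos (hδ : 0 < δ) (hτ : testMassSum a lam δ < 1) {k : ι} (hak : 0 < a k) :
    0 < testPoint a lam δ k := by
  rcases le_or_gt (a k) lam with h | h
  · exact add_pos_of_pos_of_nonneg (testMass_pos hδ hak h)
      (mul_nonneg (sub_pos.mpr hτ).le (softThreshold_nonneg a lam k))
  · rw [testPoint_of_gt k h]
    exact mul_pos (sub_pos.mpr hτ) (softThreshold_pos h)

end TestPoint

lemma EReal.coe_finset_sum {ι : Type*} (s : Finset ι) (f : ι → ℝ) :
    ((∑ i ∈ s, f i : ℝ) : EReal) = ∑ i ∈ s, (f i : EReal) :=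
  map_sum (⟨⟨(↑), EReal.coe_zero⟩, EReal.coe_add⟩ : ℝ →+ EReal) f s

lemma negLogTerm_eq_coe {a z : ℝ} (h : a = 0 ∨ 0 < z) :
    negLogTerm a z = ((-(a * log z) : ℝ) : EReal) := by
  rcases h with rfl | hz
  · simp [negLogTerm]
  · by_cases ha : a = 0 <;> simp [negLogTerm, ha, hz.ne']

lemma negLogTerm_nonneg {a z : ℝ} (ha : 0 ≤ a) (hz : z ∈ Set.Icc (0 : ℝ) 1) :
    0 ≤ negLogTerm a z := by
  unfold negLogTerm
  split_ifs
  · exact le_rfl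
  · exact le_top
  · exact EReal.coe_nonneg.mpr (neg_nonneg.mpr (mul_nonpos_of_nonneg_of_nonpos ha
      (log_nonpos hz.1 hz.2)))

section Fdelta

variable {K : ℕ} {a z : Fin K → ℝ} {lam δ : ℝ}

lemma Fdelta_eq_coe (h : ∀ k, a k = 0 ∨ 0 < z k) :
    Fdelta a lam δ z = ((∑ k, penalizedTerm lam δ (a k) (z k) : ℝ) : EReal) := by
  simp only [Fdelta, penalizedTerm, sum_add_distrib, ← mul_sum, EReal.coe_add,
    EReal.coe_finset_sum, negLogTerm_eq_coe (h _)]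

lemma Fdelta_eq_top (ha : ∀ k, 0 ≤ a k) (hz : z ∈ stdSimplex ℝ (Fin K)) {k : Fin K}
    (hak : a k ≠ 0) (hzk : z k = 0) : Fdelta a lam δ z = ⊤ := by
  have hrest : 0 ≤ ∑ j ∈ univ.erase k, negLogTerm (a j) (z j) :=
    sum_nonneg fun j _ => negLogTerm_nonneg (ha j) (mem_Icc_of_mem_stdSimplex hz j)
  rw [Fdelta, ← add_sum_erase _ _ (mem_univ k), negLogTerm, if_neg hak, if_pos hzk,
    EReal.top_add_of_ne_bot (hrest.trans_lt' EReal.bot_lt_zero).ne', EReal.top_add_coe]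

lemma pos_and_sum_penalizedTerm_le_of_Fdelta_le {w : Fin K → ℝ} (ha : ∀ k, 0 ≤ a k)
    (hz : z ∈ stdSimplex ℝ (Fin K)) (hw : ∀ k, 0 < a k → 0 < w k)
    (hle : Fdelta a lam δ z ≤ Fdelta a lam δ w) :
    (∀ k, 0 < a k → 0 < z k) ∧
      ∑ k, penalizedTerm lam δ (a k) (z k) ≤ ∑ k, penalizedTerm lam δ (a k) (w k) := by
  have zero_or_pos {v : Fin K → ℝ} (hv : ∀ k, 0 < a k → 0 < v k) (k : Fin K) :
      a k = 0 ∨ 0 < v k :=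
    (ha k).eq_or_lt.imp Eq.symm (hv k)
  rw [Fdelta_eq_coe (zero_or_pos hw)] at hle
  have hzpos : ∀ k, 0 < a k → 0 < z k := fun k hak =>
    (hz.1 k).lt_of_ne fun hzk => EReal.coe_ne_top _ <|
      top_le_iff.mp (Fdelta_eq_top ha hz hak.ne' hzk.symm ▸ hle)
  rw [Fdelta_eq_coe (zero_or_pos hzpos)] at hle
  exact ⟨hzpos, EReal.coe_le_coe_iff.mp hle⟩

end Fdelta

section Remainder

variable {ι : Type*} [Fintype ι] {a : ι → ℝ} {lam δ : ℝ}

lemma penalizedTerm_testPoint_le (hlam : 0 < lam) (hδ : 0 < δ) (ha : ∀ k, 0 ≤ a k)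
    (hτ : testMassSum a lam δ < 1) (k : ι) :
    penalizedTerm lam δ (a k) (testPoint a lam δ k)
      ≤ penalizedMinorant lam δ (a k) (testPoint a lam δ k)
        + if lam ≤ a k then lam * (δ / testPoint a lam δ k) else 0 := by
  by_cases h : lam ≤ a k
  · rw [if_pos h]
    exact penalizedTerm_le_penalizedMinorant_add_of_le hlam hδ
      (testPoint_pos hδ hτ (hlam.trans_le h)) h
  · rw [if_neg h, add_zero, testPoint_of_lt k (not_le.mp h)]
    exact (penalizedTerm_eq_penalizedMinorant_of_lt hδ (ha k) (not_le.mp h)).le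

lemma max_sub_mul_log_testPoint (hτ : testMassSum a lam δ < 1) (k : ι) :
    max (a k - lam) 0 * log (testPoint a lam δ k)
      = max (a k - lam) 0 * (log (1 - testMassSum a lam δ) + log (softThreshold a lam k)) := by
  rcases le_or_gt (a k) lam with h | h
  · rw [max_eq_right (sub_nonpos.mpr h), zero_mul, zero_mul]
  · rw [testPoint_of_gt k h, log_mul (sub_pos.mpr hτ).ne' (softThreshold_pos h).ne']

lemma mul_sum_mul_log_sub_le_testPointRemainder {z : ι → ℝ} (hlam : 0 < lam) (hδ : 0 < δ)
    (ha : ∀ k, 0 ≤ a k) (hs : 0 < ∑ j, max (a j - lam) 0) (hτ : testMassSum a lam δ < 1)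
    (hz : ∀ k, 0 ≤ z k) (hzpos : ∀ k, 0 < a k → 0 < z k)
    (hle : ∑ k, penalizedTerm lam δ (a k) (z k)
      ≤ ∑ k, penalizedTerm lam δ (a k) (testPoint a lam δ k)) :
    (∑ j, max (a j - lam) 0)
        * ∑ k, softThreshold a lam k * (log (softThreshold a lam k) - log (z k))
      ≤ testPointRemainder a lam δ := by
  set s := ∑ j, max (a j - lam) 0
  set w := testPoint a lam δ
  have hsplit : ∀ k, max (a k - lam) 0 * (log (w k) - log (z k))
      = s * (softThreshold a lam k * (log (softThreshold a lam k) - log (z k)))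
        + max (a k - lam) 0 * log (1 - testMassSum a lam δ) := by
    intro k
    rw [mul_sub, max_sub_mul_log_testPoint hτ, max_sub_eq_mul_softThreshold a hs k]
    ring
  calc s * ∑ k, softThreshold a lam k * (log (softThreshold a lam k) - log (z k))
      = ∑ k, max (a k - lam) 0 * (log (w k) - log (z k))
          - s * log (1 - testMassSum a lam δ) := by
        rw [sum_congr rfl fun k _ => hsplit k, sum_add_distrib, ← mul_sum, ← sum_mul]
        ring
    _ = ∑ k, (penalizedMinorant lam δ (a k) (z k) - penalizedMinorant lam δ (a k) (w k))
          - s * log (1 - testMassSum a lam δ) := by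
        simp only [penalizedMinorant_sub]
    _ ≤ ∑ k, (penalizedTerm lam δ (a k) (z k) - penalizedMinorant lam δ (a k) (w k))
          - s * log (1 - testMassSum a lam δ) := by
        gcongr with k
        exact penalizedMinorant_le_penalizedTerm hlam hδ (ha k) (hz k) (hzpos k)
    _ ≤ ∑ k, (penalizedTerm lam δ (a k) (w k) - penalizedMinorant lam δ (a k) (w k))
          - s * log (1 - testMassSum a lam δ) := by
        simp only [sum_sub_distrib]
        linarith
    _ ≤ testPointRemainder a lam δ := by
        rw [testPointRemainder]
        gcongr with k
        linarith [penalizedTerm_testPoint_le hlam hδ ha hτ k]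

end Remainder

section Limits

variable {ι : Type*} [Fintype ι] (a : ι → ℝ) (lam : ℝ)

lemma continuous_testMassSum : Continuous (testMassSum a lam) :=
  continuous_finsetSum _ fun j _ => continuous_testMass lam (a j)

lemma tendsto_testMassSum : Tendsto (testMassSum a lam) (𝓝 0) (𝓝 0) := by
  simpa [testMassSum, testMass_zero] using (continuous_testMassSum a lam).tendsto 0

lemma tendsto_div_testPoint {k : ι} (h : lam ≤ a k) :
    Tendsto (fun δ => δ / testPoint a lam δ k) (𝓝 0) (𝓝 0) := by
  rcases h.eq_or_lt with heq | hlt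
  · have hw : ∀ δ, testPoint a lam δ k = √δ := fun δ => by
      simp [testPoint, testMass, ← heq, softThreshold_eq_zero heq.ge]
    simpa [hw, div_sqrt] using continuous_sqrt.tendsto 0
  · have hw : Tendsto (fun δ => testPoint a lam δ k) (𝓝 0) (𝓝 (softThreshold a lam k)) := by
      simpa [testPoint_of_gt k hlt] using ((tendsto_const_nhds (x := (1 : ℝ))).sub
        (tendsto_testMassSum a lam)).mul_const (softThreshold a lam k)
    have := tendsto_id.div hw (softThreshold_pos hlt).ne'
    rwa [zero_div] at this

lemma tendsto_testPointRemainder : Tendsto (testPointRemainder a lam) (𝓝 0) (𝓝 0) := by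
  have hgap : Tendsto (fun δ => ∑ k, if lam ≤ a k then lam * (δ / testPoint a lam δ k) else 0)
      (𝓝 0) (𝓝 0) := by
    have hk : ∀ k, Tendsto (fun δ => if lam ≤ a k then lam * (δ / testPoint a lam δ k) else 0)
        (𝓝 0) (𝓝 0) := by
      intro k
      split_ifs with h
      · simpa using (tendsto_div_testPoint a lam h).const_mul lam
      · exact tendsto_const_nhds
    simpa using tendsto_finsetSum univ fun k _ => hk k
  have hlog : Tendsto (fun δ => log (1 - testMassSum a lam δ)) (𝓝 0) (𝓝 0) := by
    simpa using ((tendsto_const_nhds (x := (1 : ℝ))).sub (tendsto_testMassSum a lam)).log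
      (by norm_num)
  have := hgap.sub (hlog.const_mul (∑ j, max (a j - lam) 0))
  rwa [mul_zero, sub_zero] at this

end Limits

lemma sum_max_sub_pos {K : ℕ} {a : Fin K → ℝ} {lam : ℝ} (ha1 : ∑ k, a k = 1)
    (hlam1 : lam < 1 / (K : ℝ)) : 0 < ∑ k, max (a k - lam) 0 := by
  have hK : 0 < K := Nat.pos_of_ne_zero (by rintro rfl; simp at ha1)
  have hKlam : K * lam < 1 := by rwa [lt_div_iff₀ (by positivity), mul_comm] at hlam1
  have hsum : 1 - K * lam ≤ ∑ k, max (a k - lam) 0 := by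
    calc 1 - K * lam = ∑ k, (a k - lam) := by simp [sum_sub_distrib, ha1]
      _ ≤ ∑ k, max (a k - lam) 0 := sum_le_sum fun k _ => le_max_left _ _
  linarith

lemma norm_sub_lt_of_sum_sq_sqrt_sub_lt {ι : Type*} [Fintype ι] {x y : ι → ℝ}
    (hx : x ∈ stdSimplex ℝ ι) (hy : y ∈ stdSimplex ℝ ι) {ε : ℝ} (hε : 0 < ε)
    (h : ∑ i, (√(x i) - √(y i)) ^ 2 < (ε / 2) ^ 2) : ‖x - y‖ < ε := by
  refine (pi_norm_lt_iff hε).mpr fun k => ?_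
  have hk : (√(x k) - √(y k)) ^ 2 < (ε / 2) ^ 2 :=
    (single_le_sum (fun i _ => sq_nonneg (√(x i) - √(y i))) (mem_univ k)).trans_lt h
  have hsqrt := abs_lt_of_sq_lt_sq hk (by positivity)
  rw [Pi.sub_apply, Real.norm_eq_abs]
  linarith [abs_sub_le_two_mul_abs_sqrt_sub (mem_Icc_of_mem_stdSimplex hx k)
    (mem_Icc_of_mem_stdSimplex hy k)]

theorem log_penalty_minimizers_converge_general {K : ℕ}
    (a : Fin K → ℝ) (ha0 : ∀ k, 0 ≤ a k) (ha1 : ∑ k, a k = 1)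
    (lam : ℝ) (hlam0 : 0 < lam) (hlam1 : lam < 1 / (K : ℝ))
    (z₀ : Fin K → ℝ)
    (hz₀ : ∀ k, z₀ k = max (a k - lam) 0 / ∑ j, max (a j - lam) 0) :
    ∀ ε > 0, ∃ δ₀ > 0, ∀ δ : ℝ, 0 < δ → δ < δ₀ →
      ∀ zδ : Fin K → ℝ, (∀ k, 0 ≤ zδ k) → (∑ k, zδ k = 1) →
        (∀ z : Fin K → ℝ, (∀ k, 0 ≤ z k) → (∑ k, z k = 1) →
          Fdelta a lam δ zδ ≤ Fdelta a lam δ z) →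
        ‖zδ - z₀‖ < ε := by
  intro ε hε
  obtain rfl : z₀ = softThreshold a lam := funext hz₀
  have hs := sum_max_sub_pos ha1 hlam1
  have hev : ∀ᶠ δ in 𝓝 0, testMassSum a lam δ < 1 ∧
      testPointRemainder a lam δ < (∑ j, max (a j - lam) 0) * (ε / 2) ^ 2 :=
    ((tendsto_testMassSum a lam).eventually (gt_mem_nhds one_pos)).and
      ((tendsto_testPointRemainder a lam).eventually (gt_mem_nhds (by positivity)))
  obtain ⟨δ₀, hδ₀, hδ₀ev⟩ := Metric.eventually_nhds_iff.mp hev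
  refine ⟨δ₀, hδ₀, fun δ hδ hδδ₀ zδ hz0 hz1 hmin => ?_⟩
  obtain ⟨hτ, hR⟩ := hδ₀ev (by rwa [Real.dist_0_eq_abs, abs_of_pos hδ])
  have hz : zδ ∈ stdSimplex ℝ (Fin K) := ⟨hz0, hz1⟩
  have hw := testPoint_mem_stdSimplex hδ.le ha0 hs hτ.le
  obtain ⟨hzpos, hle⟩ := pos_and_sum_penalizedTerm_le_of_Fdelta_le ha0 hz
    (fun k => testPoint_pos hδ hτ) (hmin _ hw.1 hw.2)
  have hkl := mul_sum_mul_log_sub_le_testPointRemainder hlam0 hδ ha0 hs hτ hz0 hzpos hle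
  have hhel := sum_sq_sqrt_sub_sqrt_le_sum_mul_log_sub (softThreshold_nonneg a lam) hz0
    (fun k hk => hzpos k (hlam0.trans (softThreshold_pos_iff.mp hk)))
    (softThreshold_mem_stdSimplex a hs).2 hz1
  refine norm_sub_lt_of_sum_sq_sqrt_sub_lt hz (softThreshold_mem_stdSimplex a hs) hε
    (lt_of_mul_lt_mul_left ?_ hs.le)
  calc _ ≤ _ := mul_le_mul_of_nonneg_left hhel hs.le
    _ ≤ _ := hkl
    _ < _ := hR

/-- Theorem 3.1: for `a ∈ Δ^K` and `0 < λ < 1/K`, every family of minimizers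
`z_δ` of `F_δ` over the simplex converges, as `δ → 0⁺`, to the normalized
soft-threshold `z₀` with `z₀_k = (a_k − λ)₊ / ∑_j (a_j − λ)₊`. -/
theorem log_penalty_minimizers_converge {K : ℕ} (hK : 0 < K)
    (a : Fin K → ℝ) (ha0 : ∀ k, 0 ≤ a k) (ha1 : ∑ k, a k = 1)
    (lam : ℝ) (hlam0 : 0 < lam) (hlam1 : lam < 1 / (K : ℝ))
    (z₀ : Fin K → ℝ)
    (hz₀ : ∀ k, z₀ k = max (a k - lam) 0 / ∑ j, max (a j - lam) 0) :
    ∀ ε > 0, ∃ δ₀ > 0, ∀ δ : ℝ, 0 < δ → δ < δ₀ →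
      ∀ zδ : Fin K → ℝ, (∀ k, 0 ≤ zδ k) → (∑ k, zδ k = 1) →
        (∀ z : Fin K → ℝ, (∀ k, 0 ≤ z k) → (∑ k, z k = 1) →
          Fdelta a lam δ zδ ≤ Fdelta a lam δ z) →
        ‖zδ - z₀‖ < ε :=
  log_penalty_minimizers_converge_general a ha0 ha1 lam hlam0 hlam1 z₀ hz₀
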